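/- Define *L_0 = *L and *L_n = {*L_{n-1}, ..., *L_1, *L_0} for n ≥ 1. If G = {*L_{a_1}, ..., *L_{a_ℓ}} and a = mex{a_1, ..., a_ℓ}, then G ≡ *L_a, i.e. o(G + X) = o(*L_a + X) for every position X. -/

import Mathlib

/-- Positions of LR-ending partisan games: two terminals and finite option sets
(represented as lists; set-like behavior is captured by the `Iso` relation). -/
inductive Pos : Type
  | termL : Pos
  | termR : Pos
  | opts : List Pos → Pos

namespace Pos

/-- Valid positions: every non-terminal position has a nonempty set of options. -/
inductive Valid : Pos → Prop
  | termL : Valid termL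
  | termR : Valid termR
  | opts : ∀ gs : List Pos, gs ≠ [] → (∀ g ∈ gs, Valid g) → Valid (opts gs)

/-- Disjunctive sum. -/
def sum : Pos → Pos → Pos
  | termL, termL => termL
  | termL, termR => termR
  | termR, termL => termR
  | termR, termR => termL
  | termL, opts hs => opts (hs.attach.map (fun h => sum termL h.1))
  | termR, opts hs => opts (hs.attach.map (fun h => sum termR h.1))
  | opts gs, termL => opts (gs.attach.map (fun g => sum g.1 termL))
  | opts gs, termR => opts (gs.attach.map (fun g => sum g.1 termR))
  | opts gs, opts hs =>
      opts (gs.attach.map (fun g => sum g.1 (opts hs)) ++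
            hs.attach.map (fun h => sum (opts gs) h.1))
termination_by g h => sizeOf g + sizeOf h
decreasing_by
  all_goals
    first
      | (have := List.sizeOf_lt_of_mem h.2; simp_all; omega)
      | (have := List.sizeOf_lt_of_mem g.2; simp_all; omega)

/-- Conjugate: swap the two kinds of terminal positions. -/
def conj : Pos → Pos
  | termL => termR
  | termR => termL
  | opts gs => opts (gs.attach.map (fun g => conj g.1))
decreasing_by
  have := List.sizeOf_lt_of_mem g.2; simp_all; omega

/-- Isomorphism of game trees (positions viewed as sets of options). -/
def Iso : Pos → Pos → Prop
  | termL, termL => True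
  | termR, termR => True
  | opts gs, opts hs =>
      (∀ g ∈ gs.attach, ∃ h ∈ hs.attach, Iso g.1 h.1) ∧
      (∀ h ∈ hs.attach, ∃ g ∈ gs.attach, Iso g.1 h.1)
  | _, _ => False
termination_by g h => sizeOf g + sizeOf h
decreasing_by
  all_goals
    (have hg := List.sizeOf_lt_of_mem g.2; have hh := List.sizeOf_lt_of_mem h.2;
     simp_all; omega)

inductive Player : Type
  | left : Player
  | right : Player
  deriving DecidableEq

/-- `Wins p b G` : player `p` has a winning strategy from position `G`,
where `b = true` means it is `p`'s turn to move and `b = false` means the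
opponent is to move.  A terminal position is won by the player given by
its label, regardless of whose turn it is. -/
inductive Wins : Player → Bool → Pos → Prop
  | termL : ∀ b, Wins Player.left b termL
  | termR : ∀ b, Wins Player.right b termR
  | move : ∀ (p : Player) (gs : List Pos) (g : Pos), g ∈ gs →
      Wins p false g → Wins p true (opts gs)
  | wait : ∀ (p : Player) (gs : List Pos),
      (∀ g, g ∈ gs → Wins p true g) → Wins p false (opts gs)

inductive Outcome : Type
  | L : Outcome
  | R : Outcome
  | N : Outcome
  | P : Outcome
  deriving DecidableEq

/-- The outcome of a position. -/
noncomputable def outcome (G : Pos) : Outcome := by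
  classical
  exact
    if Wins Player.left true G then
      if Wins Player.left false G then Outcome.L else Outcome.N
    else
      if Wins Player.left false G then Outcome.P else Outcome.R

/-- Equivalence of positions: the outcome agrees in every (valid) context. -/
def equiv (G H : Pos) : Prop :=
  ∀ X : Pos, Valid X → outcome (sum G X) = outcome (sum H X)

end Pos
namespace Pos

mutual
/-- `Ln n` is the position `*L_n`: `*L_0 = *L`, `*L_n = {*L_{n-1}, ..., *L_0}`. -/
def Ln : ℕ → Pos
  | 0 => termL
  | n + 1 => opts (LnList (n + 1))
termination_by n => 2 * n + 1
/-- `LnList n = [*L_{n-1}, ..., *L_0]`. -/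
def LnList : ℕ → List Pos
  | 0 => []
  | n + 1 => Ln n :: LnList n
termination_by n => 2 * n
end

mutual
/-- `Rn n` is the position `*R_n`. -/
def Rn : ℕ → Pos
  | 0 => termR
  | n + 1 => opts (RnList (n + 1))
termination_by n => 2 * n + 1
def RnList : ℕ → List Pos
  | 0 => []
  | n + 1 => Rn n :: RnList n
termination_by n => 2 * n
end

/-- `kome n` is `✠_n = {*L_{n-1}, *R_{n-1}, ..., *L_0, *R_0}` (for `n ≥ 1`). -/
def kome (n : ℕ) : Pos := opts (LnList n ++ RnList n)

mutual
/-- `starAux n` represents `★(n+1)`: `★1 = {*L, *R}`, `★n = {★(n-1),...,★1,*L,*R}`. -/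
def starAux : ℕ → Pos
  | 0 => opts [termL, termR]
  | n + 1 => opts (starList (n + 1) ++ [termL, termR])
termination_by n => 2 * n + 1
/-- `starList n = [★n, ..., ★1]`. -/
def starList : ℕ → List Pos
  | 0 => []
  | n + 1 => starAux n :: starList n
termination_by n => 2 * n
end

/-- `bigstar n` is `★n` (meaningful for `n ≥ 1`). -/
def bigstar (n : ℕ) : Pos := starAux (n - 1)

/-- Sum of a list of positions (`*L` is the empty sum, and `G + *L = G`). -/
def sumList (l : List Pos) : Pos := l.foldr sum termL

/-- Nim-sum (XOR) of a list of naturals. -/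
def xorList (l : List ℕ) : ℕ := l.foldr (· ^^^ ·) 0

/-- Minimum excludant of a list of naturals. -/
noncomputable def mexList (l : List ℕ) : ℕ := sInf {n : ℕ | n ∉ l}

end Pos

/-
Write `a = mex as` and `G = {*L_i | i ∈ as}`. Every option `*L_j` of `*L_a` is an option of `G`,
since `j < a` forces `j ∈ as`. Every other option `*L_i` of `G` has `i > a`, so `*L_a` is an option
of `*L_i`: the move to `*L_i + X` is reversible, because the opponent can answer `*L_a + X`, and a
player who wins `*L_a + X` can also win `*L_i + X` by moving there. An induction on `X` thus shows
that `G + X` and `*L_a + X` are won by the same player for either player to move. When `X` is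
terminal, every play of either sum ends at the terminal of `X`, whose player wins outright.
-/

namespace Pos

theorem induction (motive : Pos → Prop) (termL : motive .termL) (termR : motive .termR)
    (opts : ∀ gs, (∀ g ∈ gs, motive g) → motive (.opts gs)) : ∀ X, motive X
  | .termL => termL
  | .termR => termR
  | .opts gs => opts gs (fun g _ => Pos.induction motive termL termR opts g)
termination_by X => sizeOf X
decreasing_by have := List.sizeOf_lt_of_mem ‹g ∈ gs›; simp_all; omega

def options : Pos → List Pos
  | opts gs => gs
  | _ => []

def term : Player → Pos
  | .left => termL
  | .right => termR

lemma sum_opts_right (G : Pos) (xs : List Pos) :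
    sum G (opts xs) = opts ((options G).map (sum · (opts xs)) ++ xs.map (sum G)) := by
  cases G <;> simp [sum, options, List.attach, List.attachWith, List.map_pmap]

lemma sum_opts_term (gs : List Pos) (p : Player) :
    sum (opts gs) (term p) = opts (gs.map (sum · (term p))) := by
  cases p <;> simp [sum, term, List.attach, List.attachWith, List.map_pmap]

lemma sum_termL_term (p : Player) : sum termL (term p) = term p := by
  cases p <;> simp [sum, term]

lemma wins_true_opts {p : Player} {gs : List Pos} :
    Wins p true (opts gs) ↔ ∃ g ∈ gs, Wins p false g :=
  ⟨fun | .move _ _ g hg hw => ⟨g, hg, hw⟩, fun ⟨g, hg, hw⟩ => .move p gs g hg hw⟩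

lemma wins_false_opts {p : Player} {gs : List Pos} :
    Wins p false (opts gs) ↔ ∀ g ∈ gs, Wins p true g :=
  ⟨fun | .wait _ _ hw => hw, .wait p gs⟩

lemma Wins.move_of_mem_options {p : Player} {P Q : Pos} (hw : Wins p false Q)
    (hQ : Q ∈ options P) : Wins p true P := by
  cases P <;> simp only [options, List.not_mem_nil] at hQ
  exact wins_true_opts.2 ⟨Q, hQ, hw⟩

lemma Wins.true_of_mem_options {p : Player} {P Q : Pos} (hw : Wins p false P)
    (hQ : Q ∈ options P) : Wins p true Q := by
  cases P <;> simp only [options, List.not_mem_nil] at hQ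
  exact wins_false_opts.1 hw Q hQ

lemma wins_true_sum_opts {p : Player} {K : Pos} {xs : List Pos} :
    Wins p true (sum K (opts xs)) ↔
      (∃ k ∈ options K, Wins p false (sum k (opts xs))) ∨ ∃ x ∈ xs, Wins p false (sum K x) := by
  rw [sum_opts_right K xs, wins_true_opts]
  simp only [List.mem_append, List.mem_map, or_and_right, exists_or, exists_exists_and_eq_and]

lemma wins_false_sum_opts {p : Player} {K : Pos} {xs : List Pos} :
    Wins p false (sum K (opts xs)) ↔
      (∀ k ∈ options K, Wins p true (sum k (opts xs))) ∧ ∀ x ∈ xs, Wins p true (sum K x) := by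
  rw [sum_opts_right K xs, wins_false_opts]
  simp only [List.forall_mem_append, List.forall_mem_map]

lemma sum_mem_options_sum_opts {g H : Pos} (hH : H ∈ options g) (xs : List Pos) :
    sum H (opts xs) ∈ options (sum g (opts xs)) := by
  rw [sum_opts_right]
  exact List.mem_append_left _ (List.mem_map_of_mem hH)

theorem wins_sum_iff_of_reversible {G H : Pos}
    (hsub : ∀ h ∈ options H, h ∈ options G)
    (hrev : ∀ g ∈ options G, g ∈ options H ∨ H ∈ options g)
    (hterm : ∀ p q b, Wins q b (sum G (term p)) ↔ Wins q b (sum H (term p))) :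
    ∀ X p b, Wins p b (sum G X) ↔ Wins p b (sum H X) := by
  intro X
  induction X using Pos.induction with
  | termL => exact hterm .left
  | termR => exact hterm .right
  | opts xs ih =>
    intro p b
    cases b
    · constructor
      · intro hw
        obtain ⟨hG, hX⟩ := wins_false_sum_opts.1 hw
        exact wins_false_sum_opts.2
          ⟨fun h hh => hG h (hsub h hh), fun x hx => (ih x hx p true).1 (hX x hx)⟩
      · intro hw
        obtain ⟨hH, hX⟩ := wins_false_sum_opts.1 hw
        refine wins_false_sum_opts.2 ⟨fun g hg => ?_, fun x hx => (ih x hx p true).2 (hX x hx)⟩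
        rcases hrev g hg with hgH | hHg
        · exact hH g hgH
        · exact hw.move_of_mem_options (sum_mem_options_sum_opts hHg xs)
    · constructor
      · intro hw
        rcases wins_true_sum_opts.1 hw with ⟨g, hg, hwg⟩ | ⟨x, hx, hwx⟩
        · rcases hrev g hg with hgH | hHg
          · exact wins_true_sum_opts.2 (.inl ⟨g, hgH, hwg⟩)
          · exact hwg.true_of_mem_options (sum_mem_options_sum_opts hHg xs)
        · exact wins_true_sum_opts.2 (.inr ⟨x, hx, (ih x hx p false).1 hwx⟩)
      · intro hw
        rcases wins_true_sum_opts.1 hw with ⟨h, hh, hwh⟩ | ⟨x, hx, hwx⟩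
        · exact wins_true_sum_opts.2 (.inl ⟨h, hsub h hh, hwh⟩)
        · exact wins_true_sum_opts.2 (.inr ⟨x, hx, (ih x hx p false).2 hwx⟩)

def IsWonBy (p : Player) (P : Pos) : Prop := ∀ q b, Wins q b P ↔ q = p

lemma isWonBy_term : ∀ p, IsWonBy p (term p)
  | .left, _, b => ⟨fun h => by cases h; rfl, fun h => by subst h; exact .termL b⟩
  | .right, _, b => ⟨fun h => by cases h; rfl, fun h => by subst h; exact .termR b⟩

lemma IsWonBy.opts {p : Player} {gs : List Pos} (hgs : gs ≠ []) (h : ∀ g ∈ gs, IsWonBy p g) :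
    IsWonBy p (opts gs) := by
  intro q b
  obtain ⟨g₀, hg₀⟩ := List.exists_mem_of_ne_nil gs hgs
  cases b
  · rw [wins_false_opts]
    exact ⟨fun hw => (h g₀ hg₀ q true).1 (hw g₀ hg₀), fun hq g hg => (h g hg q true).2 hq⟩
  · rw [wins_true_opts]
    exact ⟨fun ⟨g, hg, hw⟩ => (h g hg q false).1 hw, fun hq => ⟨g₀, hg₀, (h g₀ hg₀ q false).2 hq⟩⟩

lemma IsWonBy.wins_iff {p : Player} {P Q : Pos} (hP : IsWonBy p P) (hQ : IsWonBy p Q)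
    (q : Player) (b : Bool) : Wins q b P ↔ Wins q b Q :=
  (hP q b).trans (hQ q b).symm

lemma isWonBy_sum_opts_term {p : Player} {gs : List Pos} (hgs : gs ≠ [])
    (h : ∀ g ∈ gs, IsWonBy p (sum g (term p))) : IsWonBy p (sum (opts gs) (term p)) := by
  rw [sum_opts_term]
  exact .opts (by simpa using hgs) (by simpa using h)

lemma outcome_eq_of_wins_iff {P Q : Pos} (h : ∀ b, Wins .left b P ↔ Wins .left b Q) :
    outcome P = outcome Q := by
  unfold outcome
  rw [propext (h true), propext (h false)]

lemma mem_LnList {g : Pos} {n : ℕ} : g ∈ LnList n ↔ ∃ j < n, g = Ln j := by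
  induction n with
  | zero => simp [LnList]
  | succ n ih =>
    rw [LnList]
    simp [ih, le_iff_lt_or_eq, or_and_right, exists_or, or_comm]

lemma options_Ln (n : ℕ) : options (Ln n) = LnList n := by
  cases n <;> rw [Ln, LnList] <;> rfl

lemma Ln_mem_LnList_or_of_ne {i j : ℕ} (h : i ≠ j) : Ln i ∈ LnList j ∨ Ln j ∈ LnList i := by
  simp only [mem_LnList]
  rcases Nat.lt_or_gt_of_ne h with hij | hji
  exacts [.inl ⟨i, hij, rfl⟩, .inr ⟨j, hji, rfl⟩]

lemma isWonBy_sum_Ln_term (p : Player) (n : ℕ) : IsWonBy p (sum (Ln n) (term p)) := by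
  induction n using Nat.strong_induction_on with
  | _ n ih =>
    cases n with
    | zero => rw [Ln, sum_termL_term]; exact isWonBy_term p
    | succ n =>
      rw [Ln]
      refine isWonBy_sum_opts_term (List.ne_nil_of_mem (mem_LnList.2 ⟨n, n.lt_succ_self, rfl⟩)) ?_
      intro g hg
      obtain ⟨j, hj, rfl⟩ := mem_LnList.1 hg
      exact ih j hj

lemma mexList_notMem (as : List ℕ) : mexList as ∉ as :=
  Nat.sInf_mem (List.finite_toSet as).infinite_compl.nonempty

lemma mem_of_lt_mexList {as : List ℕ} {j : ℕ} (hj : j < mexList as) : j ∈ as :=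
  not_not.mp (Nat.notMem_of_lt_sInf hj)

lemma wins_sum_opts_map_Ln_iff (as : List ℕ) (h : as ≠ []) (X : Pos) (p : Player) (b : Bool) :
    Wins p b (sum (opts (as.map Ln)) X) ↔ Wins p b (sum (Ln (mexList as)) X) := by
  have hsub : ∀ g ∈ options (Ln (mexList as)), g ∈ options (opts (as.map Ln)) := by
    intro g hg
    rw [options_Ln, mem_LnList] at hg
    obtain ⟨j, hj, rfl⟩ := hg
    exact List.mem_map_of_mem (mem_of_lt_mexList hj)
  have hrev : ∀ g ∈ options (opts (as.map Ln)),
      g ∈ options (Ln (mexList as)) ∨ Ln (mexList as) ∈ options g := by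
    intro g hg
    obtain ⟨i, hi, rfl⟩ := List.mem_map.1 hg
    rw [options_Ln, options_Ln]
    exact Ln_mem_LnList_or_of_ne (ne_of_mem_of_not_mem hi (mexList_notMem as))
  have hterm (p : Player) : IsWonBy p (sum (opts (as.map Ln)) (term p)) :=
    isWonBy_sum_opts_term (by simpa using h) (by simpa using fun i _ => isWonBy_sum_Ln_term p i)
  exact wins_sum_iff_of_reversible hsub hrev
    (fun p => (hterm p).wins_iff (isWonBy_sum_Ln_term p _)) X p b

end Pos

/-- if `G = {*L_{a_1}, ..., *L_{a_ℓ}}` and `a = mex{a_1,...,a_ℓ}`,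
then `G ≡ *L_a`. -/
theorem opts_Ln_equiv_Ln_mex (as : List ℕ) (h : as ≠ []) :
    Pos.equiv (Pos.opts (as.map Pos.Ln)) (Pos.Ln (Pos.mexList as)) := by
  intro X _
  exact Pos.outcome_eq_of_wins_iff (Pos.wins_sum_opts_map_Ln_iff as h X .left)
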